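/- Let w̄ ∈ int C⁺ with ‖w̄‖_* = 1, let α > 0 and β ∈ ℝ with β ≥ sup_{x∈X} w̄ᵀΓ(x). Let v ∈ ℝ^q satisfy v ∉ int P, d(v, P) < α and w̄ᵀv ≥ β + α, and let (x^v, z^v) be an optimal solution of (P(v)). Then y^v := v + z^v is a weakly C-minimal element of P but not a C-minimal element of P: ({y^v} − int C) ∩ P = ∅, yet ({y^v} − (C∖{0})) ∩ P ≠ ∅. -/
import Mathlib


open Set Pointwise

noncomputable section

/-- Dot product on `Fin q → ℝ`. -/
def dotp {q : ℕ} (w y : Fin q → ℝ) : ℝ := ∑ i, w i * y i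

/-- `N` is a norm on `Fin q → ℝ`. -/
def IsNormFn {q : ℕ} (N : (Fin q → ℝ) → ℝ) : Prop :=
  (∀ z, N z = 0 ↔ z = 0) ∧ (∀ (a : ℝ) (z : Fin q → ℝ), N (a • z) = |a| * N z) ∧
    (∀ z w, N (z + w) ≤ N z + N w)

/-- Dual norm of `N`. -/
def dualNormFn {q : ℕ} (N : (Fin q → ℝ) → ℝ) (w : Fin q → ℝ) : ℝ :=
  sSup ((fun z => dotp w z) '' {z | N z ≤ 1})

/-- Distance (w.r.t. the norm `N`) from a point to a set. -/
def distFn {q : ℕ} (N : (Fin q → ℝ) → ℝ) (v : Fin q → ℝ) (A : Set (Fin q → ℝ)) : ℝ :=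
  sInf ((fun y => N (v - y)) '' A)

/-- Dual cone of a set. -/
def dualCone' {q : ℕ} (C : Set (Fin q → ℝ)) : Set (Fin q → ℝ) :=
  {w | ∀ y ∈ C, 0 ≤ dotp w y}

lemma dotp_smul' {q : ℕ} (w : Fin q → ℝ) (a : ℝ) (z : Fin q → ℝ) :
    dotp w (a • z) = a * dotp w z := by
  unfold dotp
  rw [Finset.mul_sum]
  refine Finset.sum_congr rfl fun i _ => ?_
  simp [mul_comm, mul_left_comm]

lemma dotp_add' {q : ℕ} (w y z : Fin q → ℝ) :
    dotp w (y + z) = dotp w y + dotp w z := by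
  simp [dotp, mul_add, Finset.sum_add_distrib]

lemma dotp_sub' {q : ℕ} (w y z : Fin q → ℝ) :
    dotp w (y - z) = dotp w y - dotp w z := by
  simp [dotp, mul_sub, Finset.sum_sub_distrib]

lemma normfn_nonneg {q : ℕ} {N : (Fin q → ℝ) → ℝ} (hN : IsNormFn N) (z : Fin q → ℝ) :
    0 ≤ N z := by
  have h0 : N 0 = 0 := (hN.1 0).mpr rfl
  have hneg : N (-z) = N z := by
    have := hN.2.1 (-1) z
    simpa using this
  have := hN.2.2 z (-z)
  simp [h0, hneg] at this
  linarith

/-- if the reference point `v` lies outside `int S` (i.e.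
`w̄ᵀv ≥ β + α`), then `y^v = v + z^v` is weakly C-minimal but not C-minimal in P. -/
theorem stmt14 {q n : ℕ}
    (N : (Fin q → ℝ) → ℝ) (hN : IsNormFn N)
    (C : Set (Fin q → ℝ))
    (hCclosed : IsClosed C) (hCconv : Convex ℝ C)
    (hCcone : ∀ t : ℝ, 0 ≤ t → ∀ y ∈ C, t • y ∈ C)
    (hCsolid : (interior C).Nonempty)
    (hCpointed : ∀ y ∈ C, -y ∈ C → y = 0)
    (hCnontriv : {(0 : Fin q → ℝ)} ⊂ C ∧ C ⊂ Set.univ)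
    (X : Set (Fin n → ℝ)) (hX : IsCompact X) (hXconv : Convex ℝ X)
    (hXint : (interior X).Nonempty)
    (Γ : (Fin n → ℝ) → (Fin q → ℝ)) (hΓ : ContinuousOn Γ X)
    (hΓconv : ∀ x₁ ∈ X, ∀ x₂ ∈ X, ∀ t : ℝ, t ∈ Icc (0:ℝ) 1 →
      t • Γ x₁ + (1 - t) • Γ x₂ - Γ (t • x₁ + (1 - t) • x₂) ∈ C)
    (wb : Fin q → ℝ) (hwb : wb ∈ interior (dualCone' C))
    (hwbn : dualNormFn N wb = 1)
    (α β : ℝ) (hα : 0 < α) (hβ : ∀ x ∈ X, dotp wb (Γ x) ≤ β)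
    (v : Fin q → ℝ)
    (hv1 : v ∉ interior (Γ '' X + C))
    (hv2 : distFn N v (Γ '' X + C) < α)
    (hv3 : β + α ≤ dotp wb v)
    (xv : Fin n → ℝ) (zv : Fin q → ℝ)
    (hxv : xv ∈ X) (hfeas : v + zv - Γ xv ∈ C)
    (hzopt : N zv = distFn N v (Γ '' X + C)) :
    ({v + zv} - interior C) ∩ (Γ '' X + C) = ∅ ∧
    ({v + zv} - (C \ {0})) ∩ (Γ '' X + C) ≠ ∅ := by
  have h0C : (0 : Fin q → ℝ) ∈ C := hCnontriv.1.subset rfl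
  -- C is closed under addition
  have hCadd : ∀ c₁ ∈ C, ∀ c₂ ∈ C, c₁ + c₂ ∈ C := by
    intro c₁ h₁ c₂ h₂
    have hmid : (1/2 : ℝ) • c₁ + (1/2 : ℝ) • c₂ ∈ C :=
      hCconv h₁ h₂ (by norm_num) (by norm_num) (by norm_num)
    have := hCcone 2 (by norm_num) _ hmid
    have heq : (2 : ℝ) • ((1/2 : ℝ) • c₁ + (1/2 : ℝ) • c₂) = c₁ + c₂ := by
      module
    rwa [heq] at this
  -- P + C ⊆ P
  have hPC : ∀ p ∈ Γ '' X + C, ∀ c ∈ C, p + c ∈ Γ '' X + C := by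
    intro p hp c hc
    obtain ⟨a, ha, b, hb, rfl⟩ := hp
    exact ⟨a, ha, b + c, hCadd b hb c hc, (add_assoc a b c).symm⟩
  -- distFn lower bound uses
  have hbdd : BddBelow ((fun y => N (v - y)) '' (Γ '' X + C)) := by
    refine ⟨0, ?_⟩
    rintro r ⟨y, _, rfl⟩
    exact normfn_nonneg hN _
  have hdle : ∀ y ∈ Γ '' X + C, distFn N v (Γ '' X + C) ≤ N (v - y) := by
    intro y hy
    exact csInf_le hbdd ⟨y, hy, rfl⟩
  constructor
  · -- weak minimality
    rw [Set.eq_empty_iff_forall_notMem]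
    rintro p ⟨hp1, hp2⟩
    rw [Set.mem_sub] at hp1
    obtain ⟨a, ha, c, hc, hac⟩ := hp1
    rw [Set.mem_singleton_iff] at ha
    subst ha
    -- p = v + zv - c, c ∈ interior C, p ∈ P
    by_cases hz : zv = 0
    · -- then v ∈ p + interior C ⊆ interior P
      subst hz
      apply hv1
      rw [mem_interior]
      refine ⟨{p} + interior C, ?_, ?_, ?_⟩
      · rintro y hy
        rw [Set.singleton_add] at hy
        obtain ⟨b, hb, rfl⟩ := hy
        exact hPC p hp2 b (interior_subset hb)
      · exact IsOpen.add_left isOpen_interior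
      · rw [Set.singleton_add]
        exact ⟨c, hc, by show p + c = v; rw [← hac]; module⟩
    · -- slide towards v
      have hNz : 0 < N zv := by
        rcases lt_or_eq_of_le (normfn_nonneg hN zv) with h | h
        · exact h
        · exact absurd ((hN.1 zv).mp h.symm) hz
      -- find small t > 0 with c - t • zv ∈ C
      have hcont : Continuous (fun t : ℝ => c - t • zv) :=
        continuous_const.sub (continuous_id.smul continuous_const)
      have hU : IsOpen ((fun t : ℝ => c - t • zv) ⁻¹' interior C) :=
        isOpen_interior.preimage hcont
      have h0U : (0 : ℝ) ∈ (fun t : ℝ => c - t • zv) ⁻¹' interior C := by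
        simp [hc]
      obtain ⟨ε, hε, hball⟩ := Metric.isOpen_iff.mp hU 0 h0U
      set t : ℝ := min (ε / 2) 1 with ht
      have ht0 : 0 < t := lt_min (by linarith) one_pos
      have ht1 : t ≤ 1 := min_le_right _ _
      have htball : t ∈ Metric.ball (0 : ℝ) ε := by
        rw [Metric.mem_ball, Real.dist_eq, sub_zero, abs_of_pos ht0]
        calc t ≤ ε / 2 := min_le_left _ _
          _ < ε := by linarith
      have htc : c - t • zv ∈ C := interior_subset (hball htball)
      -- y' := p + (c - t • zv) ∈ P
      have hy' : p + (c - t • zv) ∈ Γ '' X + C := hPC p hp2 _ htc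
      have hveq : v - (p + (c - t • zv)) = (-(1 - t)) • zv := by
        have : p = v + zv - c := by rw [← hac]
        subst this
        module
      have hle := hdle _ hy'
      rw [hveq, hN.2.1, abs_neg] at hle
      rw [abs_of_nonneg (by linarith : (0:ℝ) ≤ 1 - t)] at hle
      rw [← hzopt] at hle
      nlinarith
  · -- not C-minimal
    -- dual norm bound: dotp wb u ≤ 1 if N u ≤ 1
    have hdual : ∀ u : Fin q → ℝ, N u ≤ 1 → dotp wb u ≤ 1 := by
      intro u hu
      by_cases hb : BddAbove ((fun z => dotp wb z) '' {z | N z ≤ 1})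
      · rw [← hwbn]
        exact le_csSup hb ⟨u, hu, rfl⟩
      · exfalso
        have := Real.sSup_of_not_bddAbove hb
        rw [dualNormFn] at hwbn
        rw [this] at hwbn
        norm_num at hwbn
    -- |dotp wb zv| ≤ N zv
    have habs : |dotp wb zv| ≤ N zv := by
      by_cases hz : zv = 0
      · subst hz; simp [dotp]; exact normfn_nonneg hN 0
      · have hNz : 0 < N zv := by
          rcases lt_or_eq_of_le (normfn_nonneg hN zv) with h | h
          · exact h
          · exact absurd ((hN.1 zv).mp h.symm) hz
        rw [abs_le]
        constructor
        · have h1 : N ((N zv)⁻¹ • (-zv)) ≤ 1 := by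
            rw [hN.2.1, abs_of_nonneg (by positivity)]
            have : N (-zv) = N zv := by
              have := hN.2.1 (-1) zv; simpa using this
            rw [this, inv_mul_cancel₀ (ne_of_gt hNz)]
          have := hdual _ h1
          rw [dotp_smul'] at this
          have hneg : dotp wb (-zv) = -dotp wb zv := by
            have := dotp_smul' wb (-1) zv; simpa using this
          rw [hneg] at this
          have h3 := mul_le_mul_of_nonneg_left this hNz.le
          rw [← mul_assoc, mul_inv_cancel₀ (ne_of_gt hNz), one_mul, mul_one] at h3
          linarith
        · have h1 : N ((N zv)⁻¹ • zv) ≤ 1 := by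
            rw [hN.2.1, abs_of_nonneg (by positivity), inv_mul_cancel₀ (ne_of_gt hNz)]
          have := hdual _ h1
          rw [dotp_smul'] at this
          have h3 := mul_le_mul_of_nonneg_left this hNz.le
          rw [← mul_assoc, mul_inv_cancel₀ (ne_of_gt hNz), one_mul, mul_one] at h3
          exact h3
    -- dotp wb (v + zv) > β
    have hNza : N zv < α := by rw [hzopt]; exact hv2
    have hgt : β < dotp wb (v + zv) := by
      rw [dotp_add']
      have h1 : -N zv ≤ dotp wb zv := neg_le_of_abs_le habs
      linarith
    -- the witness
    have hmem : Γ xv ∈ Γ '' X + C := ⟨Γ xv, ⟨xv, hxv, rfl⟩, 0, h0C, add_zero _⟩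
    have hne : v + zv - Γ xv ≠ 0 := by
      intro h
      have : dotp wb (v + zv - Γ xv) = 0 := by rw [h]; simp [dotp]
      rw [dotp_sub'] at this
      have := hβ xv hxv
      linarith
    rw [← Set.nonempty_iff_ne_empty]
    refine ⟨Γ xv, ?_, hmem⟩
    rw [Set.mem_sub]
    exact ⟨v + zv, rfl, v + zv - Γ xv, ⟨hfeas, hne⟩, by abel⟩
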